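/- arXiv:2102.05323 — 6 statements merged into one kernel-verified Lean document; each statement's English description precedes it below -/
import Mathlib

section
/- Let H be a Hermitian operator on a finite-dimensional complex Hilbert space with orthonormal eigenbasis φ_0, φ_1, …, φ_{N} and eigenvalues E_0 ≤ E_1 ≤ … ≤ E_N. Let ψ = √(1−ε²) φ_0 + Σ_{m≥1} ε_m φ_m be a unit vector with ε² = Σ_{m≥1} ε_m² ≤ 1/2 (ε_m real). Then (⟨ψ, H ψ⟩ − E_0)² ≤ ⟨ψ, H² ψ⟩ − ⟨ψ, H ψ⟩². -/
open Finset in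
lemma inner_sum_smul_ortho {V : Type*} [NormedAddCommGroup V] [InnerProductSpace ℂ V]
    {N : ℕ} (b : OrthonormalBasis (Fin N) ℂ V) (x y : Fin N → ℂ) :
    (inner ℂ (∑ i, x i • b i) (∑ i, y i • b i) : ℂ)
      = ∑ i, (starRingEnd ℂ) (x i) * y i := by
  rw [inner_sum]
  refine Finset.sum_congr rfl fun i _ => ?_
  rw [inner_smul_right, b.orthonormal.inner_left_fintype, mul_comm]

open Finset in
lemma real_key (N : ℕ) (p E : Fin (N + 1) → ℝ) (hp : ∀ i, 0 ≤ p i)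
    (hsum : ∑ i, p i = 1) (htail : ∑ m : Fin N, p m.succ ≤ 1 / 2)
    (hE : Monotone E) :
    ((∑ i, p i * E i) - E 0) ^ 2 ≤ (∑ i, p i * E i ^ 2) - (∑ i, p i * E i) ^ 2 := by
  set δ : Fin (N + 1) → ℝ := fun i => E i - E 0 with hδdef
  have hδ : ∀ i, 0 ≤ δ i := fun i => sub_nonneg.mpr (hE (Fin.zero_le i))
  have e1 : ∑ i, p i * δ i = (∑ i, p i * E i) - E 0 := by
    simp only [hδdef, mul_sub, Finset.sum_sub_distrib, ← Finset.sum_mul, hsum, one_mul]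
  have e2 : ∑ i, p i * δ i ^ 2
      = (∑ i, p i * E i ^ 2) - 2 * E 0 * (∑ i, p i * E i) + E 0 ^ 2 := by
    have : ∀ i ∈ univ, p i * δ i ^ 2
        = p i * E i ^ 2 - 2 * E 0 * (p i * E i) + E 0 ^ 2 * p i := by
      intro i _; simp only [hδdef]; ring
    rw [Finset.sum_congr rfl this, Finset.sum_add_distrib, Finset.sum_sub_distrib,
      ← Finset.mul_sum, ← Finset.mul_sum, hsum, mul_one]
  -- key Cauchy–Schwarz step
  have t0 : δ 0 = 0 := by simp [hδdef]
  have hfull : ∑ i, p i * δ i = ∑ m : Fin N, p m.succ * δ m.succ := by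
    rw [Fin.sum_univ_succ, t0]; ring
  have hfull2 : ∑ i, p i * δ i ^ 2 = p 0 * δ 0 ^ 2 + ∑ m : Fin N, p m.succ * δ m.succ ^ 2 :=
    Fin.sum_univ_succ _
  have cs : (∑ m : Fin N, p m.succ * δ m.succ) ^ 2
      ≤ (∑ m : Fin N, p m.succ) * (∑ m : Fin N, p m.succ * δ m.succ ^ 2) := by
    have h := Finset.sum_mul_sq_le_sq_mul_sq univ (fun m : Fin N => Real.sqrt (p m.succ))
      (fun m : Fin N => Real.sqrt (p m.succ) * δ m.succ)
    have e3 : ∀ m ∈ (univ : Finset (Fin N)),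
        Real.sqrt (p m.succ) * (Real.sqrt (p m.succ) * δ m.succ) = p m.succ * δ m.succ := by
      intro m _; rw [← mul_assoc, Real.mul_self_sqrt (hp _)]
    have e4 : ∀ m ∈ (univ : Finset (Fin N)),
        Real.sqrt (p m.succ) ^ 2 = p m.succ := fun m _ => Real.sq_sqrt (hp _)
    have e5 : ∀ m ∈ (univ : Finset (Fin N)),
        (Real.sqrt (p m.succ) * δ m.succ) ^ 2 = p m.succ * δ m.succ ^ 2 := by
      intro m _; rw [mul_pow, Real.sq_sqrt (hp _)]
    rwa [Finset.sum_congr rfl e3, Finset.sum_congr rfl e4, Finset.sum_congr rfl e5] at h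
  have htailsq_nonneg : 0 ≤ ∑ m : Fin N, p m.succ * δ m.succ ^ 2 :=
    Finset.sum_nonneg fun m _ => mul_nonneg (hp _) (sq_nonneg _)
  have key : 2 * (∑ i, p i * δ i) ^ 2 ≤ ∑ i, p i * δ i ^ 2 := by
    rw [hfull, hfull2, t0]
    nlinarith [mul_nonneg (hp 0) (sq_nonneg (δ 0))]
  have e1sq : (∑ i, p i * δ i) ^ 2 = ((∑ i, p i * E i) - E 0) ^ 2 := by rw [e1]
  nlinarith [key, e2, e1sq]

/-- Theorem 1 of the paper in operator form: for a Hermitian operator `T` with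
orthonormal eigenbasis `b` and nondecreasing real eigenvalues `E`, and
`ψ = √(1−ε²) b 0 + ∑ ε_m b (m+1)` a unit vector with `ε² = ∑ ε_m² ≤ 1/2`,
the squared energy estimation error is bounded by the energy variance. -/
theorem stmt_3 {V : Type*} [NormedAddCommGroup V] [InnerProductSpace ℂ V]
    (n : ℕ) (b : OrthonormalBasis (Fin (n + 1)) ℂ V)
    (T : V →ₗ[ℂ] V) (E : Fin (n + 1) → ℝ)
    (hT : ∀ m, T (b m) = (E m : ℂ) • b m)
    (hE : Monotone E)
    (ε : Fin n → ℝ) (hε : (∑ m, ε m ^ 2) ≤ 1 / 2)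
    (ψ : V) (hunit : ‖ψ‖ = 1)
    (hψ : ψ = (Real.sqrt (1 - ∑ m, ε m ^ 2) : ℂ) • b 0
        + ∑ m : Fin n, (ε m : ℂ) • b m.succ) :
    ((inner ℂ ψ (T ψ) : ℂ).re - E 0) ^ 2
      ≤ (inner ℂ ψ (T (T ψ)) : ℂ).re - (inner ℂ ψ (T ψ) : ℂ).re ^ 2 := by
  set S : ℝ := ∑ m, ε m ^ 2 with hS
  have hS0 : 0 ≤ S := Finset.sum_nonneg fun m _ => sq_nonneg _
  have hS1 : 1 - S ≥ 0 := by linarith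
  set c : Fin (n + 1) → ℝ := Fin.cons (Real.sqrt (1 - S)) ε with hc
  have hψ' : ψ = ∑ i, (c i : ℂ) • b i := by
    rw [hψ, Fin.sum_univ_succ]
    simp [hc]
  have hTψ : T ψ = ∑ i, ((c i * E i : ℝ) : ℂ) • b i := by
    rw [hψ', map_sum]
    refine Finset.sum_congr rfl fun i _ => ?_
    rw [map_smul, hT, smul_smul]
    push_cast
    ring_nf
  have hTTψ : T (T ψ) = ∑ i, ((c i * E i ^ 2 : ℝ) : ℂ) • b i := by
    rw [hTψ, map_sum]
    refine Finset.sum_congr rfl fun i _ => ?_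
    rw [map_smul, hT, smul_smul]
    push_cast
    ring_nf
  have h1 : (inner ℂ ψ (T ψ) : ℂ).re = ∑ i, c i ^ 2 * E i := by
    rw [hTψ, hψ', inner_sum_smul_ortho]
    have : ∀ i ∈ Finset.univ, (starRingEnd ℂ) ((c i : ℂ)) * ((c i * E i : ℝ) : ℂ)
        = ((c i ^ 2 * E i : ℝ) : ℂ) := by
      intro i _; rw [Complex.conj_ofReal]; push_cast; ring
    rw [Finset.sum_congr rfl this, ← Complex.ofReal_sum, Complex.ofReal_re]
  have h2 : (inner ℂ ψ (T (T ψ)) : ℂ).re = ∑ i, c i ^ 2 * E i ^ 2 := by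
    rw [hTTψ, hψ', inner_sum_smul_ortho]
    have : ∀ i ∈ Finset.univ, (starRingEnd ℂ) ((c i : ℂ)) * ((c i * E i ^ 2 : ℝ) : ℂ)
        = ((c i ^ 2 * E i ^ 2 : ℝ) : ℂ) := by
      intro i _; rw [Complex.conj_ofReal]; push_cast; ring
    rw [Finset.sum_congr rfl this, ← Complex.ofReal_sum, Complex.ofReal_re]
  rw [h1, h2]
  have hc0 : c 0 ^ 2 = 1 - S := by
    simp only [hc, Fin.cons_zero]
    exact Real.sq_sqrt hS1
  have hcs : ∀ m : Fin n, c m.succ = ε m := fun m => by simp [hc]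
  refine real_key n (fun i => c i ^ 2) E (fun i => sq_nonneg _) ?_ ?_ hE
  · rw [Fin.sum_univ_succ, hc0]
    have : ∑ m : Fin n, c m.succ ^ 2 = S := by
      rw [hS]; exact Finset.sum_congr rfl fun m _ => by rw [hcs m]
    rw [this]; ring
  · have : ∑ m : Fin n, c m.succ ^ 2 = S := by
      rw [hS]; exact Finset.sum_congr rfl fun m _ => by rw [hcs m]
    rw [this]; exact hε
end

section
/- Let p_m ≥ 0 (m = 0,1,…,N) with Σ_m p_m = 1 and p_0 ≥ 1/2, and let E_0 ≤ E_1 ≤ … ≤ E_N be reals. Define μ = Σ_m p_m E_m and V = Σ_m p_m E_m² − μ². Then (μ − E_0)² ≤ V. -/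
/-- Probabilistic version of Theorem 1: for a probability distribution over
ordered energy levels with ground probability at least `1/2`, the squared
deviation of the mean from the ground energy is bounded by the variance. -/
theorem stmt_8 (N : ℕ) (p E : Fin (N + 1) → ℝ)
    (hp : ∀ m, 0 ≤ p m) (hsum : (∑ m, p m) = 1)
    (hp0 : 1 / 2 ≤ p 0) (hE : Monotone E) :
    ((∑ m, p m * E m) - E 0) ^ 2
      ≤ (∑ m, p m * E m ^ 2) - (∑ m, p m * E m) ^ 2 := by
  set q : Fin (N + 1) → ℝ := fun m => E m - E 0 with hqdef
  have hq0 : q 0 = 0 := by simp [hqdef]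
  have hqnn : ∀ m, 0 ≤ q m := fun m => sub_nonneg.2 (hE (Fin.zero_le m))
  set s := Finset.univ.erase (0 : Fin (N + 1)) with hs
  have h1 : (∑ m, p m * q m) = ∑ m ∈ s, p m * q m :=
    (Finset.sum_erase _ (by simp [hq0])).symm
  have hps : (∑ m ∈ s, p m) ≤ 1 / 2 := by
    have h := Finset.add_sum_erase Finset.univ p (Finset.mem_univ (0 : Fin (N + 1)))
    rw [hsum] at h
    linarith
  have cs : (∑ m ∈ s, p m * q m) ^ 2
      ≤ (∑ m ∈ s, p m) * (∑ m ∈ s, p m * q m ^ 2) := by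
    have := Finset.sum_mul_sq_le_sq_mul_sq s (fun m => Real.sqrt (p m))
      (fun m => Real.sqrt (p m) * q m)
    have e1 : ∀ m ∈ s, Real.sqrt (p m) * (Real.sqrt (p m) * q m) = p m * q m := by
      intro m _
      rw [← mul_assoc, Real.mul_self_sqrt (hp m)]
    have e2 : ∀ m ∈ s, Real.sqrt (p m) ^ 2 = p m := by
      intro m _; exact Real.sq_sqrt (hp m)
    have e3 : ∀ m ∈ s, (Real.sqrt (p m) * q m) ^ 2 = p m * q m ^ 2 := by
      intro m _
      rw [mul_pow, Real.sq_sqrt (hp m)]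
    rwa [Finset.sum_congr rfl e1, Finset.sum_congr rfl e2,
      Finset.sum_congr rfl e3] at this
  have hq2nn : ∀ m ∈ (Finset.univ : Finset (Fin (N + 1))), 0 ≤ p m * q m ^ 2 :=
    fun m _ => mul_nonneg (hp m) (sq_nonneg _)
  have h2 : (∑ m ∈ s, p m * q m ^ 2) ≤ ∑ m, p m * q m ^ 2 :=
    Finset.sum_le_sum_of_subset_of_nonneg (Finset.erase_subset _ _)
      (fun m hm _ => hq2nn m hm)
  have hqmnn : 0 ≤ ∑ m ∈ s, p m * q m ^ 2 :=
    Finset.sum_nonneg fun m hm => hq2nn m (Finset.mem_univ m)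
  have key : 2 * (∑ m, p m * q m) ^ 2 ≤ ∑ m, p m * q m ^ 2 := by
    rw [h1]
    nlinarith [cs, hps, hqmnn, h2]
  -- algebraic identities relating shifted sums to original ones
  have hμ : (∑ m, p m * q m) = (∑ m, p m * E m) - E 0 := by
    have : ∀ m ∈ (Finset.univ : Finset (Fin (N + 1))),
        p m * q m = p m * E m - p m * E 0 := by
      intro m _; simp [hqdef]; ring
    rw [Finset.sum_congr rfl this, Finset.sum_sub_distrib, ← Finset.sum_mul, hsum]
    ring
  have hv : (∑ m, p m * q m ^ 2)
      = (∑ m, p m * E m ^ 2) - 2 * E 0 * (∑ m, p m * E m) + E 0 ^ 2 := by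
    have : ∀ m ∈ (Finset.univ : Finset (Fin (N + 1))),
        p m * q m ^ 2 = p m * E m ^ 2 - 2 * E 0 * (p m * E m) + E 0 ^ 2 * p m := by
      intro m _; simp [hqdef]; ring
    rw [Finset.sum_congr rfl this]
    rw [Finset.sum_add_distrib, Finset.sum_sub_distrib, ← Finset.mul_sum,
      ← Finset.mul_sum, hsum]
    ring
  rw [hμ, hv] at key
  nlinarith [key]
end

section
/- Let H be Hermitian with eigenvalues E_0 < E_1 ≤ … and let ψ be a unit vector with ⟨ψ, H ψ⟩ ≤ (E_0+E_1)/2. Then |⟨ψ, H ψ⟩ − E_0| ≤ √(⟨ψ, H² ψ⟩ − ⟨ψ, H ψ⟩²). -/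
open ComplexConjugate

lemma stmt_12_aux (n : ℕ) (p E : Fin (n + 2) → ℝ) (hp : ∀ i, 0 ≤ p i)
    (hsum : ∑ i, p i = 1) (hE : Monotone E) (h01 : E 0 < E 1)
    (hen : ∑ i, p i * E i ≤ (E 0 + E 1) / 2) :
    |(∑ i, p i * E i) - E 0|
      ≤ Real.sqrt ((∑ i, p i * E i ^ 2) - (∑ i, p i * E i) ^ 2) := by
  set μ := ∑ i, p i * E i with hμdef
  have hμ0 : E 0 ≤ μ := by
    calc E 0 = ∑ i, p i * E 0 := by rw [← Finset.sum_mul, hsum, one_mul]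
    _ ≤ μ := Finset.sum_le_sum fun i _ =>
        mul_le_mul_of_nonneg_left (hE (Fin.zero_le i)) (hp i)
  have hpos : ∀ i, 0 ≤ p i * ((E i - E 0) * (E i - E 1)) := by
    intro i
    rcases eq_or_ne i 0 with h | h
    · simp [h]
    · have h1 : (1 : Fin (n + 2)) ≤ i := by
        have := Fin.pos_of_ne_zero h
        rw [Fin.lt_def] at this
        rw [Fin.le_def, Fin.val_one]
        omega
      have hEi : E 1 ≤ E i := hE h1
      have h0i : E 0 ≤ E i := le_of_lt (lt_of_lt_of_le h01 hEi)
      exact mul_nonneg (hp i) (mul_nonneg (by linarith) (by linarith))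
  have hsumpos : 0 ≤ ∑ i, p i * ((E i - E 0) * (E i - E 1)) :=
    Finset.sum_nonneg fun i _ => hpos i
  have expand : ∑ i, p i * ((E i - E 0) * (E i - E 1))
      = (∑ i, p i * E i ^ 2) - (E 0 + E 1) * μ + (E 0 * E 1) * 1 := by
    rw [hμdef, ← hsum, Finset.mul_sum, Finset.mul_sum]
    rw [← Finset.sum_sub_distrib, ← Finset.sum_add_distrib]
    exact Finset.sum_congr rfl fun i _ => by ring
  have hkey : (E 0 + E 1) * μ - E 0 * E 1 ≤ ∑ i, p i * E i ^ 2 := by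
    rw [expand] at hsumpos; linarith
  have hvar : (μ - E 0) ^ 2 ≤ (∑ i, p i * E i ^ 2) - μ ^ 2 := by nlinarith
  rw [abs_of_nonneg (by linarith)]
  exact (Real.le_sqrt (by linarith) (by nlinarith)).mpr hvar

/-- Main practical result: if the measured mean energy lies below the midpoint
of the two lowest energy levels, then the standard deviation bounds the
ground-state-energy estimation error. -/
theorem stmt_12 {V : Type*} [NormedAddCommGroup V] [InnerProductSpace ℂ V]
    (n : ℕ) (b : OrthonormalBasis (Fin (n + 2)) ℂ V)
    (T : V →ₗ[ℂ] V) (E : Fin (n + 2) → ℝ)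
    (hT : ∀ m, T (b m) = (E m : ℂ) • b m)
    (hE : Monotone E) (h01 : E 0 < E 1)
    (ψ : V) (hunit : ‖ψ‖ = 1)
    (henergy : (inner ℂ ψ (T ψ) : ℂ).re ≤ (E 0 + E 1) / 2) :
    |(inner ℂ ψ (T ψ) : ℂ).re - E 0|
      ≤ Real.sqrt ((inner ℂ ψ (T (T ψ)) : ℂ).re - (inner ℂ ψ (T ψ) : ℂ).re ^ 2) := by
  set c : Fin (n + 2) → ℂ := fun i => b.repr ψ i with hc
  have hTv : ∀ v : V, T v = ∑ j, ((E j : ℂ) * b.repr v j) • b j := by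
    intro v
    conv_lhs => rw [← b.sum_repr v]
    rw [map_sum]
    exact Finset.sum_congr rfl fun j _ => by
      rw [map_smul, hT, smul_smul, mul_comm]
  have hrepr : ∀ (v : V) (i : Fin (n + 2)),
      b.repr (T v) i = (E i : ℂ) * b.repr v i := by
    intro v i
    rw [b.repr_apply_apply, hTv v, b.orthonormal.inner_right_fintype]
  have hinner : ∀ w : V, (inner ℂ ψ w : ℂ) = ∑ i, conj (c i) * b.repr w i := by
    intro w
    rw [← b.repr.inner_map_map ψ w]
    simp only [PiLp.inner_apply, RCLike.inner_apply', hc]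
  set p : Fin (n + 2) → ℝ := fun i => Complex.normSq (c i) with hpdef
  have hp : ∀ i, 0 ≤ p i := fun i => Complex.normSq_nonneg _
  have hsum : ∑ i, p i = 1 := by
    have h1 : (inner ℂ ψ ψ : ℂ) = 1 := by
      rw [inner_self_eq_norm_sq_to_K, hunit]; norm_num
    rw [hinner ψ] at h1
    have : (∑ i, conj (c i) * c i) = ((∑ i, p i : ℝ) : ℂ) := by
      push_cast
      exact Finset.sum_congr rfl fun i _ => by
        rw [hpdef]; simp [Complex.normSq_eq_conj_mul_self]
    rw [this] at h1
    exact_mod_cast h1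
  have hmean : (inner ℂ ψ (T ψ) : ℂ).re = ∑ i, p i * E i := by
    rw [hinner (T ψ)]
    have : (∑ i, conj (c i) * b.repr (T ψ) i) = ((∑ i, p i * E i : ℝ) : ℂ) := by
      push_cast
      refine Finset.sum_congr rfl fun i _ => ?_
      rw [hrepr ψ i, hpdef]
      simp only [← hc]
      rw [show conj (c i) * ((E i : ℂ) * c i) = (E i : ℂ) * (conj (c i) * c i) by ring,
        ← Complex.normSq_eq_conj_mul_self]
      ring
    rw [this, Complex.ofReal_re]
  have hmean2 : (inner ℂ ψ (T (T ψ)) : ℂ).re = ∑ i, p i * E i ^ 2 := by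
    rw [hinner (T (T ψ))]
    have : (∑ i, conj (c i) * b.repr (T (T ψ)) i)
        = ((∑ i, p i * E i ^ 2 : ℝ) : ℂ) := by
      push_cast
      refine Finset.sum_congr rfl fun i _ => ?_
      rw [hrepr (T ψ) i, hrepr ψ i, hpdef]
      simp only [← hc]
      rw [show conj (c i) * ((E i : ℂ) * ((E i : ℂ) * c i))
          = (E i : ℂ) ^ 2 * (conj (c i) * c i) by ring,
        ← Complex.normSq_eq_conj_mul_self]
      ring
    rw [this, Complex.ofReal_re]
  rw [hmean, hmean2]
  rw [hmean] at henergy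
  exact stmt_12_aux n p E hp hsum hE h01 henergy
end

section
/- Let H be a Hermitian operator and ρ a density matrix (positive semidefinite, trace one) on a finite-dimensional Hilbert space. Let p_m = ⟨φ_m, ρ φ_m⟩ be the diagonal entries of ρ in an orthonormal eigenbasis (φ_m) of H with eigenvalues E_m. Then Tr(ρH) = Σ_m p_m E_m and Tr(ρH²) = Σ_m p_m E_m², and if E_0 is the smallest eigenvalue with p_0 ≥ 1/2, then (Tr(ρH) − E_0)² ≤ Tr(ρH²) − (Tr(ρH))². -/
lemma stmt_15_ineq (n : ℕ) (p E : Fin (n + 1) → ℝ)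
    (hp : ∀ m, 0 ≤ p m) (hsum : ∑ m, p m = 1)
    (hE : ∀ m, E 0 ≤ E m) (hp0 : 1 / 2 ≤ p 0) :
    ((∑ m, p m * E m) - E 0) ^ 2
      ≤ (∑ m, p m * E m ^ 2) - (∑ m, p m * E m) ^ 2 := by
  set d : Fin (n + 1) → ℝ := fun m => E m - E 0 with hd
  have hd0 : ∀ m, 0 ≤ d m := fun m => by simp [hd, hE m]
  set s : Finset (Fin (n + 1)) := Finset.univ.erase 0 with hs
  -- Cauchy–Schwarz on s
  have hcs := Finset.sum_mul_sq_le_sq_mul_sq s (fun m => Real.sqrt (p m))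
      (fun m => Real.sqrt (p m) * d m)
  have h1 : ∀ m, Real.sqrt (p m) * (Real.sqrt (p m) * d m) = p m * d m := by
    intro m; rw [← mul_assoc, Real.mul_self_sqrt (hp m)]
  have h2 : ∀ m, Real.sqrt (p m) ^ 2 = p m := fun m => Real.sq_sqrt (hp m)
  have h3 : ∀ m, (Real.sqrt (p m) * d m) ^ 2 = p m * d m ^ 2 := by
    intro m; rw [mul_pow, h2]
  simp only [h1, h2, h3] at hcs
  -- sums over s vs univ
  have hps : ∑ m ∈ s, p m = 1 - p 0 := by
    have := Finset.sum_erase_add Finset.univ p (Finset.mem_univ 0)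
    rw [hsum] at this; linarith
  have hd00 : d 0 = 0 := by simp [hd]
  have hds : ∑ m ∈ s, p m * d m = ∑ m, p m * d m := by
    have h := Finset.sum_erase_add Finset.univ (fun m => p m * d m) (Finset.mem_univ 0)
    simp only [hd00, mul_zero, add_zero] at h
    exact h
  have hd2s : ∑ m ∈ s, p m * d m ^ 2 = ∑ m, p m * d m ^ 2 := by
    have h := Finset.sum_erase_add Finset.univ (fun m => p m * d m ^ 2) (Finset.mem_univ 0)
    simp only [hd00, mul_zero, add_zero, ne_eq, OfNat.ofNat_ne_zero, not_false_eq_true,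
      zero_pow] at h
    exact h
  rw [hps, hds, hd2s] at hcs
  have hS : 0 ≤ ∑ m, p m * d m ^ 2 :=
    Finset.sum_nonneg fun m _ => mul_nonneg (hp m) (sq_nonneg _)
  have key : 2 * (∑ m, p m * d m) ^ 2 ≤ ∑ m, p m * d m ^ 2 := by nlinarith
  -- rewrite goal in terms of d
  have e1 : ∑ m, p m * E m = (∑ m, p m * d m) + E 0 := by
    have : ∀ m, p m * E m = p m * d m + E 0 * p m := by intro m; simp [hd]; ring
    simp only [this, Finset.sum_add_distrib, ← Finset.mul_sum, hsum, mul_one]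
  have e2 : ∑ m, p m * E m ^ 2
      = (∑ m, p m * d m ^ 2) + 2 * E 0 * (∑ m, p m * d m) + E 0 ^ 2 := by
    have : ∀ m, p m * E m ^ 2 = p m * d m ^ 2 + 2 * E 0 * (p m * d m) + E 0 ^ 2 * p m := by
      intro m; simp [hd]; ring
    simp only [this, Finset.sum_add_distrib, ← Finset.mul_sum, hsum, mul_one]
  rw [e1, e2]; nlinarith

lemma stmt_15_trace {V : Type*} [NormedAddCommGroup V] [InnerProductSpace ℂ V]
    [FiniteDimensional ℂ V] (n : ℕ) (b : OrthonormalBasis (Fin (n + 1)) ℂ V)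
    (A : V →ₗ[ℂ] V) :
    LinearMap.trace ℂ V A = ∑ m, (inner ℂ (b m) (A (b m)) : ℂ) := by
  rw [LinearMap.trace_eq_matrix_trace ℂ b.toBasis, Matrix.trace]
  simp [Matrix.diag, LinearMap.toMatrix_apply, OrthonormalBasis.coe_toBasis_repr_apply,
    OrthonormalBasis.repr_apply_apply, OrthonormalBasis.coe_toBasis]



/-- Density-matrix version of Theorem 1: for a density operator `ρ` and a
Hermitian operator `T` with orthonormal eigenbasis `b` and nondecreasing
eigenvalues `E`, the traces `Tr(ρT)` and `Tr(ρT²)` are the population-weighted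
moments, and ground population at least `1/2` implies the variance bounds the
squared estimation error. -/
theorem stmt_15 {V : Type*} [NormedAddCommGroup V] [InnerProductSpace ℂ V]
    [FiniteDimensional ℂ V]
    (n : ℕ) (b : OrthonormalBasis (Fin (n + 1)) ℂ V)
    (T : V →ₗ[ℂ] V) (E : Fin (n + 1) → ℝ)
    (hT : ∀ m, T (b m) = (E m : ℂ) • b m)
    (hE : Monotone E)
    (ρ : V →ₗ[ℂ] V) (hρ : ρ.IsSymmetric)
    (hpos : ∀ v : V, 0 ≤ (inner ℂ v (ρ v) : ℂ).re)
    (htr : LinearMap.trace ℂ V ρ = 1) :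
    LinearMap.trace ℂ V (ρ ∘ₗ T)
        = ((∑ m, (inner ℂ (b m) (ρ (b m)) : ℂ).re * E m : ℝ) : ℂ)
    ∧ LinearMap.trace ℂ V (ρ ∘ₗ T ∘ₗ T)
        = ((∑ m, (inner ℂ (b m) (ρ (b m)) : ℂ).re * E m ^ 2 : ℝ) : ℂ)
    ∧ (1 / 2 ≤ (inner ℂ (b 0) (ρ (b 0)) : ℂ).re →
        ((∑ m, (inner ℂ (b m) (ρ (b m)) : ℂ).re * E m) - E 0) ^ 2
          ≤ (∑ m, (inner ℂ (b m) (ρ (b m)) : ℂ).re * E m ^ 2)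
            - (∑ m, (inner ℂ (b m) (ρ (b m)) : ℂ).re * E m) ^ 2) := by
  set p : Fin (n + 1) → ℝ := fun m => (inner ℂ (b m) (ρ (b m)) : ℂ).re with hp
  have hreal : ∀ m, (inner ℂ (b m) (ρ (b m)) : ℂ) = (p m : ℂ) := by
    intro m
    have h : (starRingEnd ℂ) (inner ℂ (b m) (ρ (b m)) : ℂ) = inner ℂ (b m) (ρ (b m)) := by
      rw [inner_conj_symm]; exact hρ (b m) (b m)
    have him : (inner ℂ (b m) (ρ (b m)) : ℂ).im = 0 := by
      have h2 := congrArg Complex.im h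
      rw [Complex.conj_im] at h2
      linarith
    apply Complex.ext <;> simp [hp, him]
  have hsum : ∑ m, p m = 1 := by
    have h := stmt_15_trace n b ρ
    rw [htr] at h
    have : ((∑ m, p m : ℝ) : ℂ) = 1 := by
      push_cast
      simp only [← hreal]
      exact h.symm
    exact_mod_cast this
  have hfst : LinearMap.trace ℂ V (ρ ∘ₗ T) = ((∑ m, p m * E m : ℝ) : ℂ) := by
    rw [stmt_15_trace n b]
    push_cast
    refine Finset.sum_congr rfl fun m _ => ?_
    rw [Function.comp_apply, hT m, map_smul, inner_smul_right, hreal m]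
    ring
  have hsnd : LinearMap.trace ℂ V (ρ ∘ₗ T ∘ₗ T) = ((∑ m, p m * E m ^ 2 : ℝ) : ℂ) := by
    rw [stmt_15_trace n b]
    push_cast
    refine Finset.sum_congr rfl fun m _ => ?_
    rw [Function.comp_apply, Function.comp_apply, hT m, map_smul, hT m, smul_smul,
      map_smul, inner_smul_right, hreal m]
    ring
  refine ⟨hfst, hsnd, fun hp0 => ?_⟩
  exact stmt_15_ineq n p E (fun m => hpos (b m)) hsum
    (fun m => hE (Fin.zero_le m)) hp0
end

section
/- Let H be Hermitian with minimum eigenvalue E_0, and ψ a unit vector. Then E_0 ≤ ⟨ψ, H ψ⟩, and ⟨ψ, H ψ⟩ − √(⟨ψ, H² ψ⟩ − ⟨ψ, H ψ⟩²) ≤ E_0 holds provided the ground-space population of ψ is at least 1/2. -/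
lemma varprin {V : Type*} [NormedAddCommGroup V] [InnerProductSpace ℂ V]
    [FiniteDimensional ℂ V]
    (T : V →ₗ[ℂ] V) (hT : T.IsSymmetric) (E0 : ℝ)
    (hmin : ∀ μ : ℝ, Module.End.HasEigenvalue T (μ : ℂ) → E0 ≤ μ)
    (w : V) : E0 * ‖w‖ ^ 2 ≤ (inner ℂ w (T w) : ℂ).re := by
  have hn : Module.finrank ℂ V = Module.finrank ℂ V := rfl
  set b := hT.eigenvectorBasis hn with hb
  set μ := hT.eigenvalues hn with hμ
  have hbi : ∀ i, (inner ℂ (b i) (T w) : ℂ) = (μ i : ℂ) * inner ℂ (b i) w := by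
    intro i
    have := hT.eigenvectorBasis_apply_self_apply hn w i
    simpa [OrthonormalBasis.repr_apply_apply, hb, hμ] using this
  have hterm : ∀ i, (inner ℂ w (b i) : ℂ) * inner ℂ (b i) w
      = (Complex.normSq (inner ℂ (b i) w) : ℂ) := by
    intro i
    rw [← inner_conj_symm w (b i), mul_comm, Complex.mul_conj]
  have h1 : (inner ℂ w (T w) : ℂ).re = ∑ i, μ i * Complex.normSq (inner ℂ (b i) w) := by
    rw [← b.sum_inner_mul_inner w (T w)]
    have : ∀ i : Fin (Module.finrank ℂ V), (inner ℂ w (b i) : ℂ) * inner ℂ (b i) (T w)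
        = ((μ i * Complex.normSq (inner ℂ (b i) w) : ℝ) : ℂ) := by
      intro i
      rw [hbi i]
      push_cast
      rw [← hterm i]; ring
    rw [Finset.sum_congr rfl fun i _ => this i, ← Complex.ofReal_sum, Complex.ofReal_re]
  have h2 : ‖w‖ ^ 2 = ∑ i, Complex.normSq (inner ℂ (b i) w) := by
    have h4 : (inner ℂ w w : ℂ) = ∑ i, (Complex.normSq (inner ℂ (b i) w) : ℂ) := by
      rw [← b.sum_inner_mul_inner w w]
      exact Finset.sum_congr rfl fun i _ => hterm i
    have h5 := congrArg Complex.re h4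
    rw [← inner_self_eq_norm_sq (𝕜 := ℂ) w]
    simpa using h5
  rw [h1, h2, Finset.mul_sum]
  refine Finset.sum_le_sum fun i _ => ?_
  exact mul_le_mul_of_nonneg_right (hmin _ (hT.hasEigenvalue_eigenvalues hn i))
    (Complex.normSq_nonneg _)

set_option maxHeartbeats 1000000 in
/-- Two-sided localization of the ground state energy: the mean energy is always
an upper bound on the smallest eigenvalue `E0` (variational principle), and if
the ground-space population of `ψ` is at least `1/2`, then mean minus standard
deviation is a lower bound on `E0`. -/
theorem stmt_18 {V : Type*} [NormedAddCommGroup V] [InnerProductSpace ℂ V]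
    [FiniteDimensional ℂ V]
    (T : V →ₗ[ℂ] V) (hT : T.IsSymmetric)
    (E0 : ℝ)
    (hE0 : Module.End.HasEigenvalue T (E0 : ℂ))
    (hmin : ∀ μ : ℝ, Module.End.HasEigenvalue T (μ : ℂ) → E0 ≤ μ)
    (ψ : V) (hunit : ‖ψ‖ = 1) :
    E0 ≤ (inner ℂ ψ (T ψ) : ℂ).re
    ∧ (1 / 2 ≤ ‖(Submodule.orthogonalProjectionOnto (Module.End.eigenspace T (E0 : ℂ)) ψ : V)‖ ^ 2 →
        (inner ℂ ψ (T ψ) : ℂ).re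
          - Real.sqrt ((inner ℂ ψ (T (T ψ)) : ℂ).re - (inner ℂ ψ (T ψ) : ℂ).re ^ 2) ≤ E0) := by
  have hvar : E0 ≤ (inner ℂ ψ (T ψ) : ℂ).re := by
    have := varprin T hT E0 hmin ψ
    simpa [hunit] using this
  refine ⟨hvar, fun hpop => ?_⟩
  set K := Module.End.eigenspace T (E0 : ℂ) with hK
  set u : V := (Submodule.orthogonalProjectionOnto K ψ : V) with hu
  set v : V := ψ - u with hv
  have huK : u ∈ K := (Submodule.orthogonalProjectionOnto K ψ).2
  have hvK : v ∈ Kᗮ := Submodule.sub_starProjection_mem_orthogonal ψ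
  have hψuv : ψ = u + v := by rw [hv]; abel
  have hTu : T u = (E0 : ℂ) • u := Module.End.mem_eigenspace_iff.mp huK
  have hTvK : T v ∈ Kᗮ := by
    intro x hx
    have hTx : T x = (E0 : ℂ) • x := Module.End.mem_eigenspace_iff.mp hx
    calc (inner ℂ x (T v) : ℂ) = inner ℂ (T x) v := (hT x v).symm
      _ = inner ℂ ((E0 : ℂ) • x) v := by rw [hTx]
      _ = (starRingEnd ℂ) (E0 : ℂ) * inner ℂ x v := inner_smul_left _ _ _
      _ = 0 := by rw [hvK x hx, mul_zero]
  have huv : (inner ℂ u v : ℂ) = 0 := hvK u huK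
  have hvu : (inner ℂ v u : ℂ) = 0 := by
    rw [← inner_conj_symm, huv, map_zero]
  have huTv : (inner ℂ u (T v) : ℂ) = 0 := hTvK u huK
  set p : ℝ := ‖u‖ ^ 2 with hp
  set q : ℝ := ‖v‖ ^ 2 with hq
  set a : ℝ := (inner ℂ v (T v) : ℂ).re with ha
  set bb : ℝ := ‖T v‖ ^ 2 with hbb
  have hpq : p + q = 1 := by
    have h := norm_add_sq (𝕜 := ℂ) u v
    rw [← hψuv, hunit] at h
    have hre : RCLike.re (inner ℂ u v : ℂ) = 0 := by rw [huv]; exact map_zero _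
    rw [hre] at h
    simp only [one_pow, mul_zero, add_zero] at h
    rw [hp, hq]; linarith
  have hmean : (inner ℂ ψ (T ψ) : ℂ).re = E0 * p + a := by
    have hexp : (inner ℂ ψ (T ψ) : ℂ)
        = inner ℂ u (T u) + inner ℂ u (T v) + (inner ℂ v (T u) + inner ℂ v (T v)) := by
      rw [hψuv, map_add, inner_add_left, inner_add_right, inner_add_right]
    have h1 : (inner ℂ u (T u) : ℂ) = ((E0 * ‖u‖ ^ 2 : ℝ) : ℂ) := by
      rw [hTu, inner_smul_right, inner_self_eq_norm_sq_to_K]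
      norm_cast
      rw [Complex.ofReal_mul]
      rfl
    have h2 : (inner ℂ v (T u) : ℂ) = 0 := by
      rw [hTu, inner_smul_right, hvu, mul_zero]
    rw [hexp, h1, h2, huTv]
    simp only [add_zero, zero_add, Complex.add_re, Complex.ofReal_re]
    rfl
  have hsec : (inner ℂ ψ (T (T ψ)) : ℂ).re = E0 ^ 2 * p + bb := by
    have h0 : (inner ℂ ψ (T (T ψ)) : ℂ) = inner ℂ (T ψ) (T ψ) := (hT ψ (T ψ)).symm
    have hTψ : T ψ = (E0 : ℂ) • u + T v := by rw [hψuv, map_add, hTu]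
    have hsm : ‖(E0 : ℂ) • u‖ ^ 2 = E0 ^ 2 * ‖u‖ ^ 2 := by
      rw [norm_smul, mul_pow, Complex.norm_real, Real.norm_eq_abs, sq_abs]
    have hnorm : ‖T ψ‖ ^ 2 = E0 ^ 2 * ‖u‖ ^ 2 + ‖T v‖ ^ 2 := by
      rw [hTψ, norm_add_sq (𝕜 := ℂ)]
      have hcross : RCLike.re (inner ℂ ((E0 : ℂ) • u) (T v) : ℂ) = 0 := by
        rw [inner_smul_left, huTv, mul_zero]; exact map_zero _
      rw [hcross, hsm]; ring
    have h5 : (inner ℂ (T ψ) (T ψ) : ℂ) = ((‖T ψ‖ ^ 2 : ℝ) : ℂ) := by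
      rw [inner_self_eq_norm_sq_to_K]; norm_cast
    rw [h0, h5, Complex.ofReal_re, hnorm, hp, hbb]
  have hCS : a ^ 2 ≤ q * bb := by
    have h1 : ‖(inner ℂ v (T v) : ℂ)‖ ≤ ‖v‖ * ‖T v‖ := norm_inner_le_norm v (T v)
    have h2 : |a| ≤ ‖(inner ℂ v (T v) : ℂ)‖ := Complex.abs_re_le_norm _
    have h3 : a ^ 2 ≤ (‖v‖ * ‖T v‖) ^ 2 := by
      rw [← sq_abs a]
      exact pow_le_pow_left₀ (abs_nonneg _) (le_trans h2 h1) 2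
    calc a ^ 2 ≤ (‖v‖ * ‖T v‖) ^ 2 := h3
      _ = q * bb := by rw [hq, hbb]; ring
  have hq2 : q ≤ 1 / 2 := by
    have : (1 : ℝ) / 2 ≤ p := hpop
    linarith
  have hq0 : 0 ≤ q := sq_nonneg _
  have hb0 : 0 ≤ bb := sq_nonneg _
  have hE0pq : E0 * p + E0 * q = E0 := by rw [← mul_add, hpq, mul_one]
  have hlow : 0 ≤ a - E0 * q := by
    have h := hvar
    rw [hmean] at h
    linarith
  have hkey : (a - E0 * q) ^ 2 ≤ E0 ^ 2 * p + bb - (E0 * p + a) ^ 2 := by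
    have hp1 : p = 1 - q := by linarith
    rw [hp1]
    rcases eq_or_lt_of_le hq0 with h0 | hqpos
    · have hq0' : q = 0 := h0.symm
      have haa : a ^ 2 ≤ 0 := by
        calc a ^ 2 ≤ q * bb := hCS
          _ = 0 := by rw [hq0', zero_mul]
      have ha0 : a = 0 := by nlinarith [sq_nonneg a]
      rw [hq0', ha0]
      nlinarith [hb0]
    · have key2 : (a - E0 * q) ^ 2 * q
          ≤ (E0 ^ 2 * (1 - q) + bb - (E0 * (1 - q) + a) ^ 2) * q := by
        nlinarith [hCS, mul_nonneg (by linarith : (0:ℝ) ≤ 1 - 2 * q) (sq_nonneg (a - E0 * q))]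
      exact le_of_mul_le_mul_right key2 hqpos
  rw [hmean, hsec]
  have hgoal : a - E0 * q ≤ Real.sqrt (E0 ^ 2 * p + bb - (E0 * p + a) ^ 2) := by
    rw [← Real.sqrt_sq hlow]
    exact Real.sqrt_le_sqrt hkey
  linarith
end

section
/- Let Ẽ_0, Ẽ_1, M_0, M_1 be reals with M_0, M_1 > 0, and suppose the true energies satisfy |Ẽ_0 − E_0| < M_0, |Ẽ_1 − E_1| < M_1, and E_0 < E_1. Let ψ be a unit vector for a Hermitian H whose two smallest eigenvalues are E_0 < E_1, and suppose ⟨ψ, H ψ⟩ < (Ẽ_0 + Ẽ_1)/2 − (M_0 + M_1)/2. Then |⟨ψ, H ψ⟩ − E_0| ≤ √(⟨ψ, H² ψ⟩ − ⟨ψ, H ψ⟩²). -/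
/-- End-to-end guarantee of the paper: combining the classical pre-estimation
threshold (Eq. 16), the population sufficiency (Eq. 12), and Theorem 1, the
energy standard deviation after quantum annealing upper-bounds the
ground-state-energy estimation error whenever the measured energy is below the
classically computed threshold. -/
theorem stmt_19 {V : Type*} [NormedAddCommGroup V] [InnerProductSpace ℂ V]
    (n : ℕ) (b : OrthonormalBasis (Fin (n + 2)) ℂ V)
    (T : V →ₗ[ℂ] V) (E : Fin (n + 2) → ℝ)
    (hT : ∀ m, T (b m) = (E m : ℂ) • b m)
    (hE : Monotone E) (h01 : E 0 < E 1)
    (Et0 Et1 M0 M1 : ℝ) (hM0 : 0 < M0) (hM1 : 0 < M1)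
    (h0 : |Et0 - E 0| < M0) (h1 : |Et1 - E 1| < M1)
    (ψ : V) (hunit : ‖ψ‖ = 1)
    (henergy : (inner ℂ ψ (T ψ) : ℂ).re < (Et0 + Et1) / 2 - (M0 + M1) / 2) :
    |(inner ℂ ψ (T ψ) : ℂ).re - E 0|
      ≤ Real.sqrt ((inner ℂ ψ (T (T ψ)) : ℂ).re - (inner ℂ ψ (T ψ) : ℂ).re ^ 2) := by
  -- coefficients and populations
  set c : Fin (n + 2) → ℂ := fun m => b.repr ψ m with hc
  have hA : ∀ (v : V) (m : Fin (n + 2)),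
      b.repr (T v) m = (E m : ℂ) * b.repr v m := by
    intro v m
    rw [b.repr_apply_apply]
    conv_lhs => rw [← b.sum_repr v]
    rw [map_sum, inner_sum]
    simp only [map_smul, hT, smul_smul, inner_smul_right,
      orthonormal_iff_ite.mp b.orthonormal,
      mul_ite, mul_one, mul_zero, Finset.sum_ite_eq, Finset.mem_univ, if_true]
    rw [b.repr_apply_apply]
    ring
  have hinner : ∀ x y : V, (inner ℂ x y : ℂ)
      = ∑ m, (starRingEnd ℂ) (b.repr x m) * b.repr y m := by
    intro x y
    rw [← b.repr.inner_map_map x y, PiLp.inner_apply]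
    simp only [RCLike.inner_apply]
    exact Finset.sum_congr rfl fun m _ => mul_comm _ _
  set p : Fin (n + 2) → ℝ := fun m => Complex.normSq (c m) with hp
  have hp0 : ∀ m, 0 ≤ p m := fun m => Complex.normSq_nonneg _
  have hconjmul : ∀ m, (starRingEnd ℂ) (c m) * c m = (p m : ℂ) := by
    intro m
    rw [mul_comm, Complex.mul_conj]
  have hsum1 : ∑ m, p m = 1 := by
    have h := hinner ψ ψ
    rw [inner_self_eq_norm_sq_to_K, hunit] at h
    have h2 : (1 : ℂ) = ∑ m, (p m : ℂ) := by
      refine Eq.trans ?_ (h.trans (Finset.sum_congr rfl fun m _ => hconjmul m))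
      simp
    have h3 := congrArg Complex.re h2
    simpa using h3.symm
  set μ : ℝ := (inner ℂ ψ (T ψ) : ℂ).re with hμ
  have hμeq : μ = ∑ m, p m * E m := by
    have h2 : (inner ℂ ψ (T ψ) : ℂ) = ∑ m, ((p m * E m : ℝ) : ℂ) := by
      rw [hinner ψ (T ψ)]
      refine Finset.sum_congr rfl fun m _ => ?_
      rw [hA ψ m]
      rw [show (starRingEnd ℂ) (c m) * ((E m : ℂ) * c m)
          = ((starRingEnd ℂ) (c m) * c m) * (E m : ℂ) by ring, hconjmul]
      push_cast
      ring
    rw [hμ, h2, ← Complex.ofReal_sum, Complex.ofReal_re]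
  have hSeq : (inner ℂ ψ (T (T ψ)) : ℂ).re = ∑ m, p m * E m ^ 2 := by
    have h2 : (inner ℂ ψ (T (T ψ)) : ℂ) = ∑ m, ((p m * E m ^ 2 : ℝ) : ℂ) := by
      rw [hinner ψ (T (T ψ))]
      refine Finset.sum_congr rfl fun m _ => ?_
      rw [hA (T ψ) m, hA ψ m]
      rw [show (starRingEnd ℂ) (c m) * ((E m : ℂ) * ((E m : ℂ) * c m))
          = ((starRingEnd ℂ) (c m) * c m) * (E m : ℂ) ^ 2 by ring, hconjmul]
      push_cast
      ring
    rw [h2, ← Complex.ofReal_sum, Complex.ofReal_re]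
  set S : ℝ := (inner ℂ ψ (T (T ψ)) : ℂ).re with hS
  -- μ ≥ E 0
  have hμ0 : E 0 ≤ μ := by
    rw [hμeq]
    calc E 0 = ∑ m, p m * E 0 := by rw [← Finset.sum_mul, hsum1, one_mul]
    _ ≤ ∑ m, p m * E m := by
        refine Finset.sum_le_sum fun m _ => ?_
        exact mul_le_mul_of_nonneg_left (hE (Fin.zero_le m)) (hp0 m)
  -- key spectral inequality
  have hterm : ∀ m ∈ Finset.univ, (0 : ℝ) ≤ p m * ((E m - E 0) * (E m - E 1)) := by
    intro m _
    rcases eq_or_ne m 0 with rfl | hm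
    · simp
    · have hv : (m : ℕ) ≠ 0 := fun h => hm (Fin.ext h)
      have h1m : (1 : Fin (n + 2)) ≤ m := by
        rw [Fin.le_def, Fin.val_one]
        omega
      have hEm1 : E 1 ≤ E m := hE h1m
      have hEm0 : E 0 ≤ E m := hE (Fin.zero_le m)
      exact mul_nonneg (hp0 m) (mul_nonneg (by linarith) (by linarith))
  have hexp : S - (E 0 + E 1) * μ + E 0 * E 1
      = ∑ m, p m * ((E m - E 0) * (E m - E 1)) := by
    rw [hSeq, hμeq, Finset.mul_sum]
    rw [show E 0 * E 1 = ∑ m, E 0 * E 1 * p m by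
      rw [← Finset.mul_sum, hsum1, mul_one]]
    rw [← Finset.sum_sub_distrib, ← Finset.sum_add_distrib]
    exact Finset.sum_congr rfl fun m _ => by ring
  have hKey : 0 ≤ S - (E 0 + E 1) * μ + E 0 * E 1 := by
    rw [hexp]; exact Finset.sum_nonneg hterm
  -- threshold
  have hthr : μ < (E 0 + E 1) / 2 := by
    have ha := abs_lt.mp h0
    have hb := abs_lt.mp h1
    linarith [henergy, ha.2, hb.2]
  have hvar : (μ - E 0) ^ 2 ≤ S - μ ^ 2 := by
    nlinarith [hKey, mul_nonneg (sub_nonneg.2 hμ0)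
      (by linarith : (0:ℝ) ≤ E 0 + E 1 - 2 * μ)]
  rw [abs_of_nonneg (sub_nonneg.2 hμ0)]
  have hy : 0 ≤ S - μ ^ 2 := le_trans (sq_nonneg _) hvar
  exact (Real.le_sqrt (sub_nonneg.2 hμ0) hy).mpr hvar
end
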